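/- Let w be an infinite partial word with at least one hole, over an alphabet with at least 2 letters. If there exists a completion ŵ of w such that Sub(w) = Sub(ŵ), then the shift of w by H(1) (i.e., the word σ_{H(1)}(w) starting just after the first hole) is recurrent; in particular, w is ultimately recurrent. -/

import Mathlib

/-! Let `h` be a hole and `u` occur in `w` at some `j > h`. Take the completed prefix
`c 0 ⋯ c (j-1)`, change its letter at the hole `h` to some `b ≠ c h`, and append `u`: this full
word is a subword of `w`, hence of `c`, but it cannot occur in `c` at position `0`. Its occurrence
in `c` therefore gives an occurrence of `u` in `c`, hence in `w`, strictly after `j`. Iterating,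
`u` occurs infinitely often after the hole. -/

open Set

variable {A : Type*}

/-- The full word `u` occurs at position `i` in the partial word `w`
(`none` is the hole symbol, compatible with every letter). -/
def Occurs (w : ℕ → Option A) (u : List A) (i : ℕ) : Prop :=
  ∀ j : Fin u.length, w (i + (j : ℕ)) = none ∨ w (i + (j : ℕ)) = some (u.get j)

/-- `u` is a subword of `w`: it occurs at some position. -/
def IsSubword (w : ℕ → Option A) (u : List A) : Prop :=
  ∃ i, Occurs w u i

/-- `u` is a recurrent subword of `w`: it occurs at infinitely many positions. -/
def IsRecSubword (w : ℕ → Option A) (u : List A) : Prop :=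
  {i | Occurs w u i}.Infinite

/-- Subword complexity: number of distinct full words of length `n`
that are subwords of `w`. -/
noncomputable def pcomp (w : ℕ → Option A) (n : ℕ) : ℕ :=
  {u : List A | u.length = n ∧ IsSubword w u}.ncard

/-- Number of recurrent subwords of length `n`. -/
noncomputable def rcomp (w : ℕ → Option A) (n : ℕ) : ℕ :=
  {u : List A | u.length = n ∧ IsRecSubword w u}.ncard

/-- `w` is recurrent: every subword occurs infinitely often. -/
def Recurrent (w : ℕ → Option A) : Prop :=
  ∀ u : List A, IsSubword w u → IsRecSubword w u

/-- `w` is ultimately recurrent: some shift of `w` is recurrent. -/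
def UltimatelyRecurrent (w : ℕ → Option A) : Prop :=
  ∃ p, Recurrent (fun i => w (i + p))

/-- `c` is a completion of `w`: it agrees with `w` at every non-hole position. -/
def IsCompletion (w : ℕ → Option A) (c : ℕ → A) : Prop :=
  ∀ i, ∀ a : A, w i = some a → c i = a

/-- `w` is uniformly recurrent: for every subword `u` there is a window size `m`
such that every factor of `w` of length `m` contains an occurrence of `u`. -/
def UniformlyRecurrent (w : ℕ → Option A) : Prop :=
  ∀ u : List A, IsSubword w u →
    ∃ m, ∀ i, ∃ j, i ≤ j ∧ j + u.length ≤ i + m ∧ Occurs w u j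

/-- Every factor of `w` of length `m` contains every length-`n` subword of `w`. -/
def GoodWindow (w : ℕ → Option A) (n m : ℕ) : Prop :=
  ∀ u : List A, u.length = n → IsSubword w u →
    ∀ i, ∃ j, i ≤ j ∧ j + n ≤ i + m ∧ Occurs w u j

/-- The recurrence function `R_w(n)`: the least window size `m` such that every
factor of length `m` contains every subword of length `n`. -/
noncomputable def Rfun (w : ℕ → Option A) (n : ℕ) : ℕ :=
  sInf {m | GoodWindow w n m}

/-- `w` is ultimately periodic: from some position on, `w` is compatible with a
periodic sequence of letters. -/
def UltimatelyPeriodic (w : ℕ → Option A) : Prop :=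
  ∃ N p, 0 < p ∧ ∃ a : ℕ → A, ∀ i, N ≤ i → w i = none ∨ w i = some (a (i % p))

lemma occurs_shift (w : ℕ → Option A) (p : ℕ) (u : List A) (i : ℕ) :
    Occurs (fun k => w (k + p)) u i ↔ Occurs w u (i + p) := by
  simp only [Occurs, Nat.add_right_comm]

lemma occurs_append (w : ℕ → Option A) (x y : List A) (i : ℕ) :
    Occurs w (x ++ y) i ↔ Occurs w x i ∧ Occurs w y (i + x.length) := by
  constructor
  · intro H
    refine ⟨fun j => ?_, fun j => ?_⟩
    · simpa [List.getElem_append_left j.isLt] using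
        H ⟨j, by simp only [List.length_append]; omega⟩
    · simpa [Nat.add_assoc, List.getElem_append_right] using H ⟨x.length + j, by simp⟩
  · rintro ⟨Hx, Hy⟩ ⟨j, hj⟩
    rcases lt_or_ge j x.length with hjx | hjx
    · simpa [List.getElem_append_left hjx] using Hx ⟨j, hjx⟩
    · have := Hy ⟨j - x.length, by simp at hj; omega⟩
      simpa [List.getElem_append_right hjx, Nat.add_assoc, Nat.add_sub_cancel' hjx] using this

lemma occurs_some_iff (c : ℕ → A) (u : List A) (i : ℕ) :
    Occurs (fun k => some (c k)) u i ↔ ∀ j : Fin u.length, c (i + j) = u.get j := by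
  simp [Occurs]

lemma Occurs.of_isCompletion {w : ℕ → Option A} {c : ℕ → A} (hc : IsCompletion w c)
    {u : List A} {i : ℕ} (H : Occurs (fun k => some (c k)) u i) : Occurs w u i := by
  intro j
  rw [occurs_some_iff] at H
  cases hw : w (i + j) with
  | none => exact .inl rfl
  | some a => exact .inr (by rw [← H j, hc _ _ hw])

lemma occurs_ofFn_of_isCompletion {w : ℕ → Option A} {c : ℕ → A} (hc : IsCompletion w c)
    (n i : ℕ) : Occurs w (List.ofFn fun k : Fin n => c (i + k)) i :=
  Occurs.of_isCompletion hc <| (occurs_some_iff _ _ _).2 fun j => by simp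

lemma IsCompletion.update {w : ℕ → Option A} {c : ℕ → A} (hc : IsCompletion w c)
    {h : ℕ} (hh : w h = none) (b : A) : IsCompletion w (Function.update c h b) := by
  intro i a hw
  have hih : i ≠ h := by rintro rfl; simp [hh] at hw
  rw [Function.update_of_ne hih, hc i a hw]

lemma Occurs.exists_gt_of_isSubword_iff {w : ℕ → Option A} {c : ℕ → A}
    (hc : IsCompletion w c)
    (hsub : ∀ u : List A, IsSubword w u ↔ IsSubword (fun i => some (c i)) u)
    {h : ℕ} (hh : w h = none) {b : A} (hb : b ≠ c h)
    {u : List A} {j : ℕ} (hj : h < j) (ho : Occurs w u j) : ∃ k, j < k ∧ Occurs w u k := by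
  set z := (List.ofFn fun k : Fin j => Function.update c h b k) ++ u
  have hz : Occurs w z 0 :=
    (occurs_append _ _ _ _).2
      ⟨by simpa using occurs_ofFn_of_isCompletion (hc.update hh b) j 0,
        by simpa using ho⟩
  obtain ⟨k, hk⟩ := (hsub z).1 ⟨0, hz⟩
  obtain ⟨hprefix, hu⟩ := (occurs_append _ _ _ _).1 hk
  have hk0 : k ≠ 0 := by
    rintro rfl
    have := (occurs_some_iff _ _ _).1 hprefix ⟨h, by simpa⟩
    simp only [zero_add, List.get_eq_getElem, List.getElem_ofFn, Function.update_self] at this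
    exact hb this.symm
  exact ⟨k + j, by omega, Occurs.of_isCompletion hc (by simpa using hu)⟩

lemma Set.infinite_of_nonempty_of_forall_exists_gt {α : Type*} [Preorder α] {s : Set α}
    (hne : s.Nonempty) (hgt : ∀ a ∈ s, ∃ b ∈ s, a < b) : s.Infinite := fun hfin => by
  obtain ⟨m, hm, hmax⟩ := hfin.exists_maximal hne
  obtain ⟨b, hb, hmb⟩ := hgt m hm
  exact absurd (hmax hb hmb.le) hmb.not_ge

theorem stmt15_general [Nontrivial A] (w : ℕ → Option A) (h : ℕ)
    (hh : w h = none)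
    (c : ℕ → A) (hc : IsCompletion w c)
    (hsub : ∀ u : List A, IsSubword w u ↔ IsSubword (fun i => some (c i)) u) :
    Recurrent (fun i => w (i + (h + 1))) ∧ UltimatelyRecurrent w := by
  obtain ⟨b, hb⟩ := exists_ne (c h)
  have hrec : Recurrent (fun i => w (i + (h + 1))) := by
    rintro u ⟨i₀, hi₀⟩
    refine Set.infinite_of_nonempty_of_forall_exists_gt ⟨i₀, hi₀⟩ fun i hi => ?_
    rw [mem_ofPred_eq, occurs_shift] at hi
    obtain ⟨k, hik, hk⟩ := hi.exists_gt_of_isSubword_iff hc hsub hh hb (by omega)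
    refine ⟨k - (h + 1), ?_, by omega⟩
    rwa [mem_ofPred_eq, occurs_shift, Nat.sub_add_cancel (by omega)]
  exact ⟨hrec, h + 1, hrec⟩

theorem stmt15 [Nontrivial A] (w : ℕ → Option A) (h : ℕ)
    (hh : w h = none) (hmin : ∀ j < h, w j ≠ none)
    (c : ℕ → A) (hc : IsCompletion w c)
    (hsub : ∀ u : List A, IsSubword w u ↔ IsSubword (fun i => some (c i)) u) :
    Recurrent (fun i => w (i + (h + 1))) ∧ UltimatelyRecurrent w :=
  stmt15_general w h hh c hc hsub
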